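/- arXiv:2507.20450 — 2 statements merged into one kernel-verified Lean document; each statement's English description precedes it below -/
import Mathlib

section
/- Assume lim_{s→∞} f'(s)F(s) = q with q > 1. Then I(ρ) → 0 as ρ → ∞. -/
/-!
With `g = f F` we have `F' = -1/f`, hence `g' = f' F - 1 → q - 1`. A bounded derivative makes
`g(s) = O(s)` by the mean value theorem, so `g(φ)/φ` stays bounded along `φ → ∞`, while the
other factor `f'(φ) F(φ) - q` of `I` tends to `0`.
-/

open Set Filter Topology MeasureTheory Asymptotics

theorem hasDerivAt_integral_Ioi {E : Type*} [NormedAddCommGroup E] [NormedSpace ℝ E]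
    [CompleteSpace E] {g : ℝ → E} {a s : ℝ} (hg : IntegrableOn g (Ioi a)) (has : a < s)
    (hmeas : StronglyMeasurableAtFilter g (𝓝 s)) (hcont : ContinuousAt g s) :
    HasDerivAt (fun u => ∫ t in Ioi u, g t) (-g s) s := by
  have hint : IntervalIntegrable g volume a s :=
    (intervalIntegrable_iff_integrableOn_Ioc_of_le has.le).2 (hg.mono_set Ioc_subset_Ioi_self)
  refine ((intervalIntegral.integral_hasDerivAt_right hint hmeas hcont).const_sub
    (∫ t in Ioi a, g t)).congr_of_eventuallyEq ?_
  filter_upwards [Ioi_mem_nhds has] with u hu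
  rw [← intervalIntegral.integral_Ioi_sub_Ioi hg (le_of_lt hu), sub_sub_cancel]

theorem isBigO_id_of_hasDerivAt {E : Type*} [NormedAddCommGroup E] [NormedSpace ℝ E]
    {g g' : ℝ → E} (hd : ∀ᶠ s in atTop, HasDerivAt g (g' s) s)
    (hg' : g' =O[atTop] (fun _ => (1 : ℝ))) : g =O[atTop] id := by
  obtain ⟨C, hC, hC'⟩ := hg'.exists_nonneg
  obtain ⟨N, hN⟩ := eventually_atTop.1 ((hd.and hC'.bound).and (eventually_ge_atTop 1))
  have hN1 : 1 ≤ N := (hN N le_rfl).2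
  refine .of_bound (‖g N‖ + C) ?_
  filter_upwards [eventually_ge_atTop N] with s hs
  have hlip : ‖g s - g N‖ ≤ C * ‖s - N‖ :=
    Convex.norm_image_sub_le_of_norm_hasDerivWithin_le
      (fun x hx => (hN x hx.1).1.1.hasDerivWithinAt)
      (fun x hx => by simpa using (hN x hx.1).1.2) (convex_Icc N s)
      (left_mem_Icc.2 hs) (right_mem_Icc.2 hs)
  rw [Real.norm_of_nonneg (sub_nonneg.2 hs)] at hlip
  rw [id, Real.norm_of_nonneg (by linarith)]
  calc ‖g s‖ ≤ ‖g N‖ + ‖g s - g N‖ := norm_le_norm_add_norm_sub' _ _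
    _ ≤ ‖g N‖ * s + C * s := by gcongr <;> nlinarith [norm_nonneg (g N)]
    _ = (‖g N‖ + C) * s := by ring

theorem isBigO_div_self_one_of_isBigO_id {g : ℝ → ℝ} (h : g =O[atTop] id) :
    (fun s => g s / s) =O[atTop] (fun _ => (1 : ℝ)) :=
  (div_isBoundedUnder_of_isBigO h).isBigO_one ℝ

theorem I_tendsto_zero_general (f F : ℝ → ℝ) (q : ℝ)
    (hf : ContDiffOn ℝ 2 f (Set.Ioi 0))
    (hfpos : ∀ s : ℝ, 0 < s → 0 < f s)
    (hfint : ∀ s : ℝ, 0 < s →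
      MeasureTheory.IntegrableOn (fun t => (f t)⁻¹) (Set.Ioi s))
    (hF : ∀ s : ℝ, F s = ∫ t in Set.Ioi s, (f t)⁻¹)
    (hlim : Filter.Tendsto (fun s => deriv f s * F s) Filter.atTop (nhds q))
    (φ : ℝ → ℝ)
    (hφtop : Filter.Tendsto φ Filter.atTop Filter.atTop)
    (Ifun : ℝ → ℝ)
    (hI : ∀ ρ : ℝ, Ifun ρ =
      4 * (f (φ ρ) * F (φ ρ) / φ ρ) * (deriv f (φ ρ) * F (φ ρ) - q)) :
    Filter.Tendsto Ifun Filter.atTop (nhds 0) := by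
  have hinv : ContinuousOn (fun t => (f t)⁻¹) (Ioi 0) :=
    hf.continuousOn.inv₀ fun t ht => (hfpos t ht).ne'
  have hF' : ∀ s > 0, HasDerivAt F (-(f s)⁻¹) s := fun s hs =>
    (hasDerivAt_integral_Ioi (hfint (s / 2) (half_pos hs)) (half_lt_self hs)
      (hinv.stronglyMeasurableAtFilter isOpen_Ioi s hs)
      (hinv.continuousAt (Ioi_mem_nhds hs))).congr_of_eventuallyEq (.of_forall hF)
  have hfF' : ∀ s > 0, HasDerivAt (fun u => f u * F u) (deriv f s * F s - 1) s := by
    intro s hs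
    have hfd : HasDerivAt f (deriv f s) s :=
      ((hf.contDiffAt (Ioi_mem_nhds hs)).differentiableAt (by norm_num)).hasDerivAt
    refine (hfd.mul (hF' s hs)).congr_deriv ?_
    rw [mul_neg, mul_inv_cancel₀ (hfpos s hs).ne', sub_eq_add_neg]
  have hfF_isBigO : (fun u => f u * F u) =O[atTop] id :=
    isBigO_id_of_hasDerivAt ((eventually_gt_atTop 0).mono hfF') ((hlim.sub_const 1).isBigO_one ℝ)
  have hratio : (fun ρ => f (φ ρ) * F (φ ρ) / φ ρ) =O[atTop] (fun _ => (1 : ℝ)) :=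
    (isBigO_div_self_one_of_isBigO_id hfF_isBigO).comp_tendsto hφtop
  have hdefect : Tendsto (fun ρ => deriv f (φ ρ) * F (φ ρ) - q) atTop (𝓝 0) := by
    simpa using (hlim.comp hφtop).sub_const q
  refine IsBigO.trans_tendsto ?_ hdefect
  simpa [funext hI] using ((hratio.const_mul_left 4).mul (isBigO_refl _ atTop))

/-- If `f'(s)·F(s) → q` as `s → ∞` with `q > 1`, then
`I(ρ) = 4·(f(φ(ρ))F(φ(ρ))/φ(ρ))·(f'(φ(ρ))F(φ(ρ)) − q) → 0` as `ρ → ∞`. -/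
theorem I_tendsto_zero (f F : ℝ → ℝ) (q : ℝ) (hq : 1 < q)
    (hf : ContDiffOn ℝ 2 f (Set.Ioi 0))
    (hfpos : ∀ s : ℝ, 0 < s → 0 < f s)
    (hf'pos : ∀ s : ℝ, 0 < s → 0 < deriv f s)
    (hfint : ∀ s : ℝ, 0 < s →
      MeasureTheory.IntegrableOn (fun t => (f t)⁻¹) (Set.Ioi s))
    (hF : ∀ s : ℝ, F s = ∫ t in Set.Ioi s, (f t)⁻¹)
    (hlim : Filter.Tendsto (fun s => deriv f s * F s) Filter.atTop (nhds q))
    (ρ₀ : ℝ) (φ : ℝ → ℝ)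
    (hφpos : ∀ ρ ∈ Set.Ici ρ₀, 0 < φ ρ)
    (hφderiv : ∀ ρ ∈ Set.Ici ρ₀,
      HasDerivWithinAt φ (2 * f (φ ρ) * F (φ ρ)) (Set.Ici ρ₀) ρ)
    (hφtop : Filter.Tendsto φ Filter.atTop Filter.atTop)
    (Ifun : ℝ → ℝ)
    (hI : ∀ ρ : ℝ, Ifun ρ =
      4 * (f (φ ρ) * F (φ ρ) / φ ρ) * (deriv f (φ ρ) * F (φ ρ) - q)) :
    Filter.Tendsto Ifun Filter.atTop (nhds 0) :=
  I_tendsto_zero_general f F q hf hfpos hfint hF hlim φ hφtop Ifun hI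
end

section
/- Assume lim_{s→∞} f'(s)F(s) = q with q > 1, and let λ ∈ (0, 2(q−1)). Then there exist ρ₁ ≥ ρ₀ and C > 0 such that for all ρ ≥ ρ₁: ∫_{ρ₁}^{ρ} (1+(ρ−τ))·e^{λτ}·| f(φ(τ))F(φ(τ))/φ(τ) − (q−1) | dτ ≤ C·( ∫_{ρ₁}^{ρ} (1+(ρ−τ))·e^{λτ}·| f'(φ(τ))F(φ(τ)) − q | dτ + (1+(ρ−ρ₁))·e^{λρ₁}·| f(φ(ρ₁))F(φ(ρ₁))/φ(ρ₁) − (q−1) | ). -/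
/-!
Write `g s = f s * F s / s`, `H = g ∘ φ - (q - 1)` and `E = f' (φ) F (φ) - q`. Since
`(f F)' = f' F - 1` and `φ' = 2 f(φ) F(φ)`, the function `H` solves the linear equation
`H' = 2 g(φ) (E - H)`. As `(f F)' → q - 1`, also `g → q - 1`, so from some `ρ₁` on the
coefficient `2 g(φ)` lies between a fixed `μ ∈ (λ, 2(q - 1))` and `2q`. Then the right derivative
of `|H|` is at most `-μ |H| + 2q |E|`, and the weight `w τ = (1 + (ρ - τ)) e^{λτ}` satisfies
`w' ≤ λ w`, so integrating `(w |H|)'` over `[ρ₁, ρ]` gives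
`(μ - λ) ∫ w |H| ≤ 2q ∫ w |E| + w ρ₁ |H ρ₁|`.
-/

open Set Filter Topology MeasureTheory

theorem hasDerivAt_setIntegral_Ioi {h : ℝ → ℝ} {a x : ℝ} (hint : IntegrableOn h (Ioi a))
    (hx : a < x) (hcont : ContinuousAt h x) :
    HasDerivAt (fun y => ∫ t in Ioi y, h t) (-h x) x := by
  have hprim : HasDerivAt (fun y => ∫ t in a..y, h t) (h x) x :=
    intervalIntegral.integral_hasDerivAt_right
      ((intervalIntegrable_iff_integrableOn_Ioc_of_le hx.le).2
        (hint.mono_set Ioc_subset_Ioi_self))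
      (AEStronglyMeasurable.stronglyMeasurableAtFilter_of_mem hint.1 (Ioi_mem_nhds hx)) hcont
  refine (hprim.const_sub (∫ t in Ioi a, h t)).congr_of_eventuallyEq ?_
  filter_upwards [Ioi_mem_nhds hx] with y hy
  rw [← intervalIntegral.integral_Ioi_sub_Ioi hint hy.le, sub_sub_cancel]

theorem tendsto_div_of_hasDerivAt_tendsto {G δ : ℝ → ℝ} {L : ℝ}
    (hG : ∀ᶠ s in atTop, HasDerivAt G (δ s) s) (hδ : Tendsto δ atTop (𝓝 L)) :
    Tendsto (fun s => G s / s) atTop (𝓝 L) := by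
  set k : ℝ → ℝ := fun s => G s - L * s
  have hk : k =o[atTop] id := by
    refine Asymptotics.IsLittleO.of_bound fun ε hε => ?_
    obtain ⟨N, hN⟩ := ((hG.and (hδ.eventually (Metric.closedBall_mem_nhds L (half_pos hε))))
      |>.and (eventually_ge_atTop 0)).exists_forall_of_atTop
    filter_upwards [eventually_ge_atTop N, eventually_ge_atTop (2 / ε * ‖k N‖)] with s hsN hsk
    have hslope : ‖k s - k N‖ ≤ ε / 2 * (s - N) := by
      refine norm_image_sub_le_of_norm_deriv_le_segment' (f' := fun t => δ t - L)
        (fun t ht => ?_) (fun t ht => ?_) s ⟨hsN, le_rfl⟩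
      · exact (((hN t ht.1).1.1).sub ((hasDerivAt_id t).const_mul L)).hasDerivWithinAt.congr_deriv
          (by simp)
      · simpa [Real.dist_eq] using (hN t ht.1).1.2
    have hkN : ‖k N‖ ≤ ε / 2 * s :=
      calc ‖k N‖ = ε / 2 * (2 / ε * ‖k N‖) := by field_simp
        _ ≤ ε / 2 * s := by gcongr
    rw [id, Real.norm_of_nonneg ((hN N le_rfl).2.trans hsN)]
    nlinarith [norm_sub_norm_le (k s) (k N), (hN N le_rfl).2]
  have hdiv := hk.tendsto_div_nhds_zero.add_const L
  rw [zero_add] at hdiv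
  refine hdiv.congr' ?_
  filter_upwards [eventually_ne_atTop 0] with s hs
  simp only [k, id]
  field_simp
  ring

noncomputable def absRightDeriv (u h : ℝ) : ℝ := if u = 0 then |h| else SignType.sign u * h

theorem HasDerivAt.hasDerivWithinAt_Ioi_abs {H : ℝ → ℝ} {h x : ℝ} (hH : HasDerivAt H h x) :
    HasDerivWithinAt (fun t => |H t|) (absRightDeriv (H x) h) (Ioi x) x := by
  unfold absRightDeriv
  split_ifs with hx
  · rw [hasDerivWithinAt_iff_tendsto_slope' self_notMem_Ioi]
    refine ((hasDerivAt_iff_tendsto_slope.mp hH).abs.mono_left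
      (nhdsWithin_mono _ fun y hy => ne_of_gt hy)).congr' ?_
    filter_upwards [self_mem_nhdsWithin] with y hy
    simp only [slope_def_field, hx, abs_zero, sub_zero, abs_div,
      abs_of_pos (sub_pos.mpr (mem_Ioi.mp hy))]
  · exact ((hasDerivAt_abs hx).comp x hH).hasDerivWithinAt

theorem absRightDeriv_le {c u e : ℝ} (hc : 0 ≤ c) :
    absRightDeriv u (c * (e - u)) ≤ c * (|e| - |u|) := by
  unfold absRightDeriv
  rcases lt_trichotomy u 0 with hu | rfl | hu
  · rw [if_neg hu.ne, sign_neg hu, abs_of_neg hu]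
    simp only [SignType.coe_neg_one]
    nlinarith [neg_abs_le e]
  · simp [abs_mul, abs_of_nonneg hc]
  · rw [if_neg hu.ne', sign_pos hu, abs_of_pos hu]
    simp only [SignType.coe_one]
    nlinarith [le_abs_self e]

theorem sub_mul_integral_mul_le_of_hasDerivWithinAt {w w' y y' e : ℝ → ℝ} {a b lam μ : ℝ}
    (hab : a ≤ b) (hw : ContinuousOn w (Icc a b)) (hy : ContinuousOn y (Icc a b))
    (he : ContinuousOn e (Icc a b))
    (hw' : ∀ x ∈ Ioo a b, HasDerivAt w (w' x) x)
    (hy' : ∀ x ∈ Ioo a b, HasDerivWithinAt y (y' x) (Ioi x) x)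
    (hw₀ : ∀ x ∈ Icc a b, 0 ≤ w x) (hy₀ : ∀ x ∈ Icc a b, 0 ≤ y x)
    (hww' : ∀ x ∈ Ioo a b, w' x ≤ lam * w x) (hyy' : ∀ x ∈ Ioo a b, y' x ≤ -μ * y x + e x) :
    (μ - lam) * ∫ x in a..b, w x * y x ≤ (∫ x in a..b, w x * e x) + w a * y a := by
  have hwy : IntervalIntegrable (fun x => w x * y x) volume a b :=
    (hw.mul hy).intervalIntegrable_of_Icc hab
  have hwe : IntervalIntegrable (fun x => w x * e x) volume a b :=
    (hw.mul he).intervalIntegrable_of_Icc hab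
  have hftc := intervalIntegral.sub_le_integral_of_hasDeriv_right_of_le hab (hw.mul hy)
    (fun x hx => (hw' x hx).hasDerivWithinAt.mul (hy' x hx))
    (((hw.mul hy).const_smul (lam - μ)).add (hw.mul he)).integrableOn_Icc
    (φ := fun x => (lam - μ) * (w x * y x) + w x * e x) fun x hx => by
      have hx' := Ioo_subset_Icc_self hx
      nlinarith [mul_le_mul_of_nonneg_right (hww' x hx) (hy₀ x hx'),
        mul_le_mul_of_nonneg_left (hyy' x hx) (hw₀ x hx')]
  rw [intervalIntegral.integral_add (hwy.const_mul _) hwe,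
    intervalIntegral.integral_const_mul, Pi.mul_apply, Pi.mul_apply] at hftc
  nlinarith [mul_nonneg (hw₀ b ⟨hab, le_rfl⟩) (hy₀ b ⟨hab, le_rfl⟩)]

theorem integral_weight_abs_le_of_hasDerivAt {c E H : ℝ → ℝ} {a b μ M lam : ℝ}
    (hab : a ≤ b) (hμ : 0 ≤ μ) (hlam : lam < μ) (hc : ∀ t ∈ Icc a b, c t ∈ Icc μ M)
    (hH : ContinuousOn H (Icc a b)) (hE : ContinuousOn E (Icc a b))
    (hH' : ∀ t ∈ Ioo a b, HasDerivAt H (c t * (E t - H t)) t) :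
    ∫ t in a..b, (1 + (b - t)) * Real.exp (lam * t) * |H t| ≤
      (M + 1) / (μ - lam) * ((∫ t in a..b, (1 + (b - t)) * Real.exp (lam * t) * |E t|) +
        (1 + (b - a)) * Real.exp (lam * a) * |H a|) := by
  set w : ℝ → ℝ := fun t => (1 + (b - t)) * Real.exp (lam * t)
  change ∫ t in a..b, w t * |H t| ≤
    (M + 1) / (μ - lam) * ((∫ t in a..b, w t * |E t|) + w a * |H a|)
  have hw₀ : ∀ t ∈ Icc a b, 0 ≤ w t := fun t ht =>
    mul_nonneg (by linarith [ht.2]) (Real.exp_pos _).le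
  have hw' : ∀ t, HasDerivAt w (lam * w t - Real.exp (lam * t)) t := fun t =>
    ((((hasDerivAt_id t).const_sub b).const_add 1).mul
      ((hasDerivAt_id t).const_mul lam).exp).congr_deriv (by simp only [w, id]; ring)
  have hgronwall := sub_mul_integral_mul_le_of_hasDerivWithinAt (μ := μ) (e := fun t => M * |E t|)
    (y' := fun t => absRightDeriv (H t) (c t * (E t - H t))) hab
    (by fun_prop) hH.abs (continuousOn_const.mul hE.abs) (fun t _ => hw' t)
    (fun t ht => (hH' t ht).hasDerivWithinAt_Ioi_abs) hw₀ (fun t _ => abs_nonneg _)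
    (fun t _ => sub_le_self _ (Real.exp_pos _).le) fun t ht => by
      obtain ⟨hμc, hcM⟩ := hc t (Ioo_subset_Icc_self ht)
      nlinarith [absRightDeriv_le (e := E t) (u := H t) (hμ.trans hμc), abs_nonneg (E t),
        abs_nonneg (H t)]
  have hM : μ ≤ M := (hc a ⟨le_rfl, hab⟩).1.trans (hc a ⟨le_rfl, hab⟩).2
  have hE₀ : 0 ≤ ∫ t in a..b, w t * |E t| :=
    intervalIntegral.integral_nonneg hab fun t ht => mul_nonneg (hw₀ t ht) (abs_nonneg _)
  have hH₀ : 0 ≤ w a * |H a| := mul_nonneg (hw₀ a ⟨le_rfl, hab⟩) (abs_nonneg _)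
  simp only [mul_left_comm _ M, intervalIntegral.integral_const_mul] at hgronwall
  rw [div_mul_eq_mul_div, le_div_iff₀ (sub_pos.mpr hlam)]
  nlinarith

theorem HasDerivAt.comp_div_self {P φ : ℝ → ℝ} {p t : ℝ} (hP : HasDerivAt P p (φ t))
    (hφ : HasDerivAt φ (2 * P (φ t)) t) (hφ₀ : φ t ≠ 0) :
    HasDerivAt (fun τ => P (φ τ) / φ τ) (2 * (P (φ t) / φ t) * (p - P (φ t) / φ t)) t :=
  ((hP.comp t hφ).div hφ hφ₀).congr_deriv (by simp only [Function.comp_apply]; field_simp)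

theorem exists_weighted_integral_le_of_hasDerivAt {P p φ : ℝ → ℝ} {q ρ₀ lam : ℝ}
    (hP : ∀ s, 0 < s → HasDerivAt P (p s - 1) s) (hp : ContinuousOn p (Ioi 0))
    (hpq : Tendsto p atTop (𝓝 q)) (hφpos : ∀ ρ ∈ Ici ρ₀, 0 < φ ρ)
    (hφ : ∀ ρ ∈ Ici ρ₀, HasDerivWithinAt φ (2 * P (φ ρ)) (Ici ρ₀) ρ)
    (hφtop : Tendsto φ atTop atTop) (hlam : 0 < lam) (hlam' : lam < 2 * (q - 1)) :
    ∃ ρ₁, ρ₀ ≤ ρ₁ ∧ ∃ C, 0 < C ∧ ∀ ρ ≥ ρ₁,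
      (∫ τ in ρ₁..ρ, (1 + (ρ - τ)) * Real.exp (lam * τ) * |P (φ τ) / φ τ - (q - 1)|) ≤
        C * ((∫ τ in ρ₁..ρ, (1 + (ρ - τ)) * Real.exp (lam * τ) * |p (φ τ) - q|) +
          (1 + (ρ - ρ₁)) * Real.exp (lam * ρ₁) * |P (φ ρ₁) / φ ρ₁ - (q - 1)|) := by
  have hg : Tendsto (fun s => P s / s) atTop (𝓝 (q - 1)) :=
    tendsto_div_of_hasDerivAt_tendsto ((eventually_gt_atTop 0).mono hP) (hpq.sub_const 1)
  obtain ⟨μ, hlamμ, hμq⟩ := exists_between hlam'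
  obtain ⟨ρ', hρ'⟩ := eventually_atTop.mp ((hg.comp hφtop).eventually
    (Ioo_mem_nhds (show μ / 2 < q - 1 by linarith) (show q - 1 < q by linarith)))
  refine ⟨max ρ₀ ρ', le_max_left _ _, (2 * q + 1) / (μ - lam),
    div_pos (by linarith) (by linarith), fun ρ hρ => ?_⟩
  have hρ₀ : ∀ t ∈ Icc (max ρ₀ ρ') ρ, ρ₀ ≤ t := fun t ht => (le_max_left _ _).trans ht.1
  have hφc : ContinuousOn φ (Icc (max ρ₀ ρ') ρ) := fun t ht =>
    ((hφ t (hρ₀ t ht)).continuousWithinAt).mono fun s hs => hρ₀ s hs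
  have hφmaps : MapsTo φ (Icc (max ρ₀ ρ') ρ) (Ioi 0) := fun t ht => hφpos t (hρ₀ t ht)
  have hPc : ContinuousOn P (Ioi 0) := fun s hs => (hP s hs).continuousAt.continuousWithinAt
  refine integral_weight_abs_le_of_hasDerivAt (c := fun t => 2 * (P (φ t) / φ t))
    hρ (by linarith) (by linarith) (fun t ht => ?_)
    (((hPc.comp hφc hφmaps).div hφc fun t ht => (hφmaps ht).ne').sub continuousOn_const)
    ((hp.comp hφc hφmaps).sub continuousOn_const) (fun t ht => ?_)
  · obtain ⟨hlo, hhi⟩ := hρ' t ((le_max_right _ _).trans ht.1)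
    simp only [Function.comp_apply] at hlo hhi
    constructor <;> linarith
  · have ht₀ : ρ₀ < t := (le_max_left _ _).trans_lt ht.1
    exact (((hP (φ t) (hφpos t ht₀.le)).comp_div_self
      ((hφ t ht₀.le).hasDerivAt (Ici_mem_nhds ht₀)) (hφpos t ht₀.le).ne').sub_const
      (q - 1)).congr_deriv (by ring)

theorem weighted_integral_estimate'_general (f F : ℝ → ℝ) (q : ℝ)
    (hf : ContDiffOn ℝ 2 f (Set.Ioi 0))
    (hfpos : ∀ s : ℝ, 0 < s → 0 < f s)
    (hfint : ∀ s : ℝ, 0 < s →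
      MeasureTheory.IntegrableOn (fun t => (f t)⁻¹) (Set.Ioi s))
    (hF : ∀ s : ℝ, F s = ∫ t in Set.Ioi s, (f t)⁻¹)
    (hlim : Filter.Tendsto (fun s => deriv f s * F s) Filter.atTop (nhds q))
    (ρ₀ : ℝ) (φ : ℝ → ℝ)
    (hφpos : ∀ ρ ∈ Set.Ici ρ₀, 0 < φ ρ)
    (hφderiv : ∀ ρ ∈ Set.Ici ρ₀,
      HasDerivWithinAt φ (2 * f (φ ρ) * F (φ ρ)) (Set.Ici ρ₀) ρ)
    (hφtop : Filter.Tendsto φ Filter.atTop Filter.atTop)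
    (lam : ℝ) (hlam : 0 < lam) (hlam' : lam < 2 * (q - 1)) :
    ∃ ρ₁ : ℝ, ρ₀ ≤ ρ₁ ∧ ∃ C : ℝ, 0 < C ∧ ∀ ρ ≥ ρ₁,
      (∫ τ in ρ₁..ρ, (1 + (ρ - τ)) * Real.exp (lam * τ) *
          |f (φ τ) * F (φ τ) / φ τ - (q - 1)|) ≤
        C * ((∫ τ in ρ₁..ρ, (1 + (ρ - τ)) * Real.exp (lam * τ) *
            |deriv f (φ τ) * F (φ τ) - q|) +
          (1 + (ρ - ρ₁)) * Real.exp (lam * ρ₁) *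
            |f (φ ρ₁) * F (φ ρ₁) / φ ρ₁ - (q - 1)|) := by
  have hFd : ∀ s, 0 < s → HasDerivAt F (-(f s)⁻¹) s := fun s hs => by
    rw [funext hF]
    exact hasDerivAt_setIntegral_Ioi (hfint (s / 2) (half_pos hs)) (half_lt_self hs)
      ((hf.continuousOn.continuousAt (Ioi_mem_nhds hs)).inv₀ (hfpos s hs).ne')
  have hfd : ∀ s, 0 < s → HasDerivAt f (deriv f s) s := fun s hs =>
    ((hf.differentiableOn two_ne_zero).differentiableAt (Ioi_mem_nhds hs)).hasDerivAt
  have hPd : ∀ s, 0 < s → HasDerivAt (fun s => f s * F s) (deriv f s * F s - 1) s :=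
    fun s hs => ((hfd s hs).mul (hFd s hs)).congr_deriv (by field_simp [(hfpos s hs).ne']; ring)
  exact exists_weighted_integral_le_of_hasDerivAt hPd
    ((hf.continuousOn_deriv_of_isOpen isOpen_Ioi one_le_two).mul
      fun s hs => (hFd s hs).continuousAt.continuousWithinAt)
    hlim hφpos (fun ρ hρ => by simpa only [mul_assoc] using hφderiv ρ hρ) hφtop hlam hlam'

/-- as Statement 13 but with the extra weight `1+(ρ−τ)`:
there exist `ρ₁ ≥ ρ₀` and `C > 0` such that for all `ρ ≥ ρ₁`,
`∫_{ρ₁}^{ρ} (1+(ρ−τ)) e^{λτ} |f(φ)F(φ)/φ − (q−1)| dτ ≤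
 C (∫_{ρ₁}^{ρ} (1+(ρ−τ)) e^{λτ} |f'(φ)F(φ) − q| dτ
   + (1+(ρ−ρ₁)) e^{λρ₁} |f(φ(ρ₁))F(φ(ρ₁))/φ(ρ₁) − (q−1)|)`. -/
theorem weighted_integral_estimate' (f F : ℝ → ℝ) (q : ℝ) (hq : 1 < q)
    (hf : ContDiffOn ℝ 2 f (Set.Ioi 0))
    (hfpos : ∀ s : ℝ, 0 < s → 0 < f s)
    (hf'pos : ∀ s : ℝ, 0 < s → 0 < deriv f s)
    (hfint : ∀ s : ℝ, 0 < s →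
      MeasureTheory.IntegrableOn (fun t => (f t)⁻¹) (Set.Ioi s))
    (hF : ∀ s : ℝ, F s = ∫ t in Set.Ioi s, (f t)⁻¹)
    (hlim : Filter.Tendsto (fun s => deriv f s * F s) Filter.atTop (nhds q))
    (ρ₀ : ℝ) (φ : ℝ → ℝ)
    (hφpos : ∀ ρ ∈ Set.Ici ρ₀, 0 < φ ρ)
    (hφderiv : ∀ ρ ∈ Set.Ici ρ₀,
      HasDerivWithinAt φ (2 * f (φ ρ) * F (φ ρ)) (Set.Ici ρ₀) ρ)
    (hφtop : Filter.Tendsto φ Filter.atTop Filter.atTop)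
    (lam : ℝ) (hlam : 0 < lam) (hlam' : lam < 2 * (q - 1)) :
    ∃ ρ₁ : ℝ, ρ₀ ≤ ρ₁ ∧ ∃ C : ℝ, 0 < C ∧ ∀ ρ ≥ ρ₁,
      (∫ τ in ρ₁..ρ, (1 + (ρ - τ)) * Real.exp (lam * τ) *
          |f (φ τ) * F (φ τ) / φ τ - (q - 1)|) ≤
        C * ((∫ τ in ρ₁..ρ, (1 + (ρ - τ)) * Real.exp (lam * τ) *
            |deriv f (φ τ) * F (φ τ) - q|) +
          (1 + (ρ - ρ₁)) * Real.exp (lam * ρ₁) *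
            |f (φ ρ₁) * F (φ ρ₁) / φ ρ₁ - (q - 1)|) :=
  weighted_integral_estimate'_general f F q hf hfpos hfint hF hlim ρ₀ φ hφpos hφderiv hφtop lam hlam
    hlam'
end
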